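/- arXiv:1401.3250 — 3 statements merged into one kernel-verified Lean document; each statement's English description precedes it below -/
import Mathlib

section
/- Let X₁, X₂, Y, Ŷ be finitely supported random variables with X₁ independent of X₂, and let Y_R be an auxiliary variable such that H(Ŷ | Y_R) = H(Ŷ | Y_R, X₁, Y). Then I(X₁, Ŷ; Y) + I(X₁; Ŷ) − I(Y_R; Ŷ) = I(X₁; Y) − I(Y_R; Ŷ | X₁, Y). -/
open Real BigOperators
open scoped Classical

/-- Probability of an event under a pmf `p` on a finite sample space. -/
noncomputable def prQ {Ω : Type*} [Fintype Ω] (p : Ω → ℝ) (S : Set Ω) : ℝ :=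
  ∑ ω : Ω, if ω ∈ S then p ω else 0

/-- Shannon entropy of a random variable `X` on a finite probability space. -/
noncomputable def entQ {Ω : Type*} [Fintype Ω] {α : Type*} [Fintype α]
    (p : Ω → ℝ) (X : Ω → α) : ℝ :=
  ∑ a : α, Real.negMulLog (prQ p {ω | X ω = a})

/-- Conditional entropy H(X | Z). -/
noncomputable def condEntQ {Ω : Type*} [Fintype Ω] {α γ : Type*} [Fintype α] [Fintype γ]
    (p : Ω → ℝ) (X : Ω → α) (Z : Ω → γ) : ℝ :=
  entQ p (fun ω => (X ω, Z ω)) - entQ p Z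

/-- Mutual information I(X ; Y). -/
noncomputable def miQ {Ω : Type*} [Fintype Ω] {α γ : Type*} [Fintype α] [Fintype γ]
    (p : Ω → ℝ) (X : Ω → α) (Y : Ω → γ) : ℝ :=
  entQ p X + entQ p Y - entQ p (fun ω => (X ω, Y ω))

/-- Conditional mutual information I(X ; Y | Z). -/
noncomputable def cmiQ {Ω : Type*} [Fintype Ω] {α γ δ : Type*} [Fintype α] [Fintype γ] [Fintype δ]
    (p : Ω → ℝ) (X : Ω → α) (Y : Ω → γ) (Z : Ω → δ) : ℝ :=
  condEntQ p X Z + condEntQ p Y Z - condEntQ p (fun ω => (X ω, Y ω)) Z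

lemma entQ_comp_equiv {Ω : Type*} [Fintype Ω] {α β : Type*} [Fintype α] [Fintype β]
    (p : Ω → ℝ) (X : Ω → α) (e : α ≃ β) :
    entQ p (fun ω => e (X ω)) = entQ p X := by
  unfold entQ
  rw [← Equiv.sum_comp e (fun b => Real.negMulLog (prQ p {ω | e (X ω) = b}))]
  refine Finset.sum_congr rfl fun a _ => ?_
  congr 1
  unfold prQ
  refine Finset.sum_congr rfl fun ω _ => ?_
  simp [e.injective.eq_iff]

/-- If X₁ is independent of X₂ and H(Ŷ | Y_R) = H(Ŷ | Y_R, X₁, Y), then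
I(X₁,Ŷ; Y) + I(X₁;Ŷ) − I(Y_R;Ŷ) = I(X₁;Y) − I(Y_R;Ŷ | X₁,Y). -/
theorem stmt2 {Ω α₁ α₂ γ γh γR : Type*} [Fintype Ω] [Fintype α₁] [Fintype α₂]
    [Fintype γ] [Fintype γh] [Fintype γR]
    (p : Ω → ℝ) (hp0 : ∀ ω, 0 ≤ p ω) (hp1 : ∑ ω : Ω, p ω = 1)
    (X₁ : Ω → α₁) (X₂ : Ω → α₂) (Y : Ω → γ) (Yh : Ω → γh) (YR : Ω → γR)
    (hindep : ∀ (x₁ : α₁) (x₂ : α₂),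
      prQ p {ω | X₁ ω = x₁ ∧ X₂ ω = x₂} = prQ p {ω | X₁ ω = x₁} * prQ p {ω | X₂ ω = x₂})
    (hH : condEntQ p Yh YR = condEntQ p Yh (fun ω => (YR ω, X₁ ω, Y ω))) :
    miQ p (fun ω => (X₁ ω, Yh ω)) Y + miQ p X₁ Yh - miQ p YR Yh
      = miQ p X₁ Y - cmiQ p YR Yh (fun ω => (X₁ ω, Y ω)) := by
  have e1 : entQ p (fun ω => ((X₁ ω, Yh ω), Y ω)) = entQ p (fun ω => (Yh ω, (X₁ ω, Y ω))) := by
    have := entQ_comp_equiv p (fun ω => (Yh ω, (X₁ ω, Y ω)))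
      (⟨fun z => ((z.2.1, z.1), z.2.2), fun z => (z.1.2, (z.1.1, z.2)),
        fun ⟨h, x, y⟩ => rfl, fun ⟨⟨x, h⟩, y⟩ => rfl⟩ : γh × α₁ × γ ≃ (α₁ × γh) × γ)
    simpa using this
  have e2 : entQ p (fun ω => (YR ω, Yh ω)) = entQ p (fun ω => (Yh ω, YR ω)) := by
    have := entQ_comp_equiv p (fun ω => (Yh ω, YR ω)) (Equiv.prodComm γh γR)
    simpa using this
  have e3 : entQ p (fun ω => ((YR ω, Yh ω), (X₁ ω, Y ω)))
      = entQ p (fun ω => (Yh ω, (YR ω, X₁ ω, Y ω))) := by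
    have := entQ_comp_equiv p (fun ω => (Yh ω, (YR ω, X₁ ω, Y ω)))
      (⟨fun z => ((z.2.1, z.1), z.2.2), fun z => (z.1.2, (z.1.1, z.2)),
        fun ⟨h, r, x, y⟩ => rfl, fun ⟨⟨r, h⟩, x, y⟩ => rfl⟩ :
        γh × γR × α₁ × γ ≃ (γR × γh) × α₁ × γ)
    simpa using this
  simp only [miQ, cmiQ, condEntQ] at *
  linarith
end

section
/- For jointly Gaussian real random variables defined by Y₁₁ = h₁₁X₁₁ + h₂₁X₂₁ + Z₁₁, Y_R = h₁RX₁₁ + h₂RX₂₁ + Z_R, Ŷ_R = Y_R + Z_Q, where X₁₁ ~ N(0,P₁₁), X₂₁ ~ N(0,P₂₁), Z₁₁ ~ N(0,1), Z_R ~ N(0,1), Z_Q ~ N(0,σ_Q²) are mutually independent, the mutual information satisfies I(X₁₁, X₂₁; Y₁₁, Ŷ_R) = (1/2)·log(1 + h₁₁²P₁₁ + h₂₁²P₂₁ + (h₁R²P₁₁ + h₂R²P₂₁ + (h₁₁h₂R − h₁Rh₂₁)²P₁₁P₂₁)/(1+σ_Q²)). -/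
open Real Matrix

/-!
Writing the outputs as `Y = H X + N` with `N` independent of `X`, the joint covariance of
`(X, Y)` is the block matrix `[[Σ_X, Σ_X Hᵀ], [H Σ_X, H Σ_X Hᵀ + Σ_N]]`. The change of variables
`(X, Y) ↦ (X, Y - H X)` has determinant one and makes it block diagonal, so
`det Σ_XY = det Σ_X · det Σ_N` with `det Σ_N = 1 + σ_Q²`. The mutual information therefore
reduces to `(1/2) log (det Σ_Y / (1 + σ_Q²))`, a `2 × 2` determinant.
-/

theorem Matrix.det_fromBlocks_mul_mul_add {m n R : Type*} [Fintype m] [DecidableEq m]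
    [Fintype n] [DecidableEq n] [CommRing R]
    (A : Matrix m m R) (B : Matrix m n R) (C : Matrix n m R) (D : Matrix n n R) :
    (fromBlocks A (A * B) C (C * B + D)).det = A.det * D.det := by
  have hfactor : fromBlocks A (A * B) C (C * B + D) = fromBlocks A 0 C D * fromBlocks 1 B 0 1 := by
    simp [fromBlocks_multiply]
  rw [hfactor, det_mul, det_fromBlocks_zero₁₂, det_fromBlocks_zero₂₁]
  simp

theorem Matrix.reindex_fromBlocks_fin_two {α : Type*} (A B C D : Matrix (Fin 2) (Fin 2) α) :
    reindex finSumFinEquiv finSumFinEquiv (fromBlocks A B C D) =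
      !![A 0 0, A 0 1, B 0 0, B 0 1;
         A 1 0, A 1 1, B 1 0, B 1 1;
         C 0 0, C 0 1, D 0 0, D 0 1;
         C 1 0, C 1 1, D 1 0, D 1 1] := by
  ext i j
  fin_cases i <;> fin_cases j <;> rfl

/-- Gaussian mutual information I(X₁₁,X₂₁; Y₁₁,Ŷ_R) for the half-duplex Gaussian MARC:
with Y₁₁ = h₁₁X₁₁ + h₂₁X₂₁ + Z₁₁, Y_R = h₁RX₁₁ + h₂RX₂₁ + Z_R, Ŷ_R = Y_R + Z_Q and
mutually independent zero-mean Gaussians of variances P₁₁, P₂₁, 1, 1, σ_Q², the mutual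
information (1/2)·log(det Σ_A · det Σ_B / det Σ_AB) equals
(1/2)·log(1 + h₁₁²P₁₁ + h₂₁²P₂₁ + (h₁R²P₁₁ + h₂R²P₂₁ + (h₁₁h₂R−h₁Rh₂₁)²P₁₁P₂₁)/(1+σ_Q²)). -/
theorem stmt10 (h11 h21 h1R h2R P11 P21 σQ2 : ℝ)
    (hP11 : 0 < P11) (hP21 : 0 < P21) (hσ : 0 < σQ2) :
    let vY11 : ℝ := h11 ^ 2 * P11 + h21 ^ 2 * P21 + 1
    let vYh : ℝ := h1R ^ 2 * P11 + h2R ^ 2 * P21 + 1 + σQ2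
    let cYY : ℝ := h11 * h1R * P11 + h21 * h2R * P21
    let covA : Matrix (Fin 2) (Fin 2) ℝ := !![P11, 0; 0, P21]
    let covB : Matrix (Fin 2) (Fin 2) ℝ := !![vY11, cYY; cYY, vYh]
    let covAB : Matrix (Fin 4) (Fin 4) ℝ :=
      !![P11, 0, h11 * P11, h1R * P11;
         0, P21, h21 * P21, h2R * P21;
         h11 * P11, h21 * P21, vY11, cYY;
         h1R * P11, h2R * P21, cYY, vYh]
    (1 / 2) * Real.log (covA.det * covB.det / covAB.det)
      = (1 / 2) * Real.log (1 + h11 ^ 2 * P11 + h21 ^ 2 * P21 +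
          (h1R ^ 2 * P11 + h2R ^ 2 * P21 + (h11 * h2R - h1R * h21) ^ 2 * P11 * P21)
            / (1 + σQ2)) := by
  intro vY11 vYh cYY covA covB covAB
  let H : Matrix (Fin 2) (Fin 2) ℝ := !![h11, h21; h1R, h2R]
  have hblocks : covAB = reindex finSumFinEquiv finSumFinEquiv
      (fromBlocks covA (covA * Hᵀ) (H * covA) (H * covA * Hᵀ + !![1, 0; 0, 1 + σQ2])) := by
    rw [reindex_fromBlocks_fin_two]
    ext i j
    fin_cases i <;> fin_cases j <;>
      simp [covAB, covA, H, vY11, vYh, cYY, mul_apply, vecMul, dotProduct, Fin.sum_univ_two] <;>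
      ring
  have hAB : covAB.det = covA.det * (1 + σQ2) := by
    rw [hblocks, det_reindex_self, det_fromBlocks_mul_mul_add]
    simp [det_fin_two_of]
  have hA : covA.det ≠ 0 := by
    simp [covA, det_fin_two_of, hP11.ne', hP21.ne']
  have hB : covB.det / (1 + σQ2) = 1 + h11 ^ 2 * P11 + h21 ^ 2 * P21 +
      (h1R ^ 2 * P11 + h2R ^ 2 * P21 + (h11 * h2R - h1R * h21) ^ 2 * P11 * P21) / (1 + σQ2) := by
    have : (1 : ℝ) + σQ2 ≠ 0 := by positivity
    simp only [covB, vY11, vYh, cYY, det_fin_two_of]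
    field_simp
    ring
  rw [hAB, mul_div_mul_left _ _ hA, hB]
end

section
/- For the jointly Gaussian setup Y₁₁ = h₁₁X₁₁ + h₂₁X₂₁ + Z₁₁, Y_R = h₁RX₁₁ + h₂RX₂₁ + Z_R, Ŷ_R = Y_R + Z_Q with X₁₁ ~ N(0,P₁₁), X₂₁ ~ N(0,P₂₁), Z₁₁, Z_R ~ N(0,1), Z_Q ~ N(0,σ_Q²) all independent, one has I(X₁₁, X₂₁, Ŷ_R; Y₁₁) + I(X₁₁, X₂₁; Ŷ_R) − I(Y_R; Ŷ_R) = (1/2)·log((1 + h₁₁²P₁₁ + h₂₁²P₂₁)·σ_Q²/(1+σ_Q²)). -/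
open Real Matrix

/-- Gaussian computation of the second min-term of the GQF sum rate: for
Y₁₁ = h₁₁X₁₁ + h₂₁X₂₁ + Z₁₁, Y_R = h₁RX₁₁ + h₂RX₂₁ + Z_R, Ŷ_R = Y_R + Z_Q with mutually
independent zero-mean Gaussians of variances P₁₁, P₂₁, 1, 1, σ_Q², expanding the three
mutual informations I(X₁₁,X₂₁,Ŷ_R; Y₁₁), I(X₁₁,X₂₁; Ŷ_R), I(Y_R; Ŷ_R) via Gaussian
covariance determinants yields
I(X₁₁,X₂₁,Ŷ_R;Y₁₁) + I(X₁₁,X₂₁;Ŷ_R) − I(Y_R;Ŷ_R)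
  = (1/2)·log((1 + h₁₁²P₁₁ + h₂₁²P₂₁)·σ_Q²/(1+σ_Q²)). -/
theorem stmt11 (h11 h21 h1R h2R P11 P21 σQ2 : ℝ)
    (hP11 : 0 < P11) (hP21 : 0 < P21) (hσ : 0 < σQ2) :
    let vY11 : ℝ := h11 ^ 2 * P11 + h21 ^ 2 * P21 + 1
    let vYR : ℝ := h1R ^ 2 * P11 + h2R ^ 2 * P21 + 1
    let vYh : ℝ := vYR + σQ2
    let cYY : ℝ := h11 * h1R * P11 + h21 * h2R * P21
    -- covariance of (X₁₁, X₂₁, Ŷ_R)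
    let covXXYh : Matrix (Fin 3) (Fin 3) ℝ :=
      !![P11, 0, h1R * P11;
         0, P21, h2R * P21;
         h1R * P11, h2R * P21, vYh]
    -- covariance of (X₁₁, X₂₁, Ŷ_R, Y₁₁)
    let covAll : Matrix (Fin 4) (Fin 4) ℝ :=
      !![P11, 0, h1R * P11, h11 * P11;
         0, P21, h2R * P21, h21 * P21;
         h1R * P11, h2R * P21, vYh, cYY;
         h11 * P11, h21 * P21, cYY, vY11]
    -- covariance of (Y_R, Ŷ_R)
    let covRRh : Matrix (Fin 2) (Fin 2) ℝ := !![vYR, vYR; vYR, vYh]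
    (1 / 2) * Real.log (covXXYh.det * vY11 / covAll.det)       -- I(X₁₁,X₂₁,Ŷ_R; Y₁₁)
      + (1 / 2) * Real.log (P11 * P21 * vYh / covXXYh.det)     -- I(X₁₁,X₂₁; Ŷ_R)
      - (1 / 2) * Real.log (vYR * vYh / covRRh.det)            -- I(Y_R; Ŷ_R)
    = (1 / 2) * Real.log ((1 + h11 ^ 2 * P11 + h21 ^ 2 * P21) * σQ2 / (1 + σQ2)) := by
  intro vY11 vYR vYh cYY covXXYh covAll covRRh
  have hv11 : 0 < vY11 := by positivity
  have hvR : 0 < vYR := by positivity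
  have hvh : 0 < vYh := by positivity
  have h1σ : 0 < 1 + σQ2 := by linarith
  have d1 : covXXYh.det = P11 * P21 * (1 + σQ2) := by
    show Matrix.det !![P11, 0, h1R * P11;
         0, P21, h2R * P21;
         h1R * P11, h2R * P21, (h1R ^ 2 * P11 + h2R ^ 2 * P21 + 1 + σQ2 : ℝ)] = _
    rw [Matrix.det_fin_three]
    simp
    ring
  have d2 : covAll.det = P11 * P21 * (1 + σQ2) := by
    show Matrix.det !![P11, 0, h1R * P11, h11 * P11;
         0, P21, h2R * P21, h21 * P21;
         h1R * P11, h2R * P21, (h1R ^ 2 * P11 + h2R ^ 2 * P21 + 1 + σQ2 : ℝ), h11 * h1R * P11 + h21 * h2R * P21;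
         h11 * P11, h21 * P21, h11 * h1R * P11 + h21 * h2R * P21, h11 ^ 2 * P11 + h21 ^ 2 * P21 + 1] = _
    simp [Matrix.det_succ_row_zero, Fin.sum_univ_succ, Matrix.det_fin_three,
      Fin.succAbove, Fin.castSucc, Fin.castAdd, Fin.castLE]
    ring
  have d3 : covRRh.det = vYR * σQ2 := by
    show Matrix.det !![(h1R ^ 2 * P11 + h2R ^ 2 * P21 + 1 : ℝ), h1R ^ 2 * P11 + h2R ^ 2 * P21 + 1;
      h1R ^ 2 * P11 + h2R ^ 2 * P21 + 1, h1R ^ 2 * P11 + h2R ^ 2 * P21 + 1 + σQ2]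
      = (h1R ^ 2 * P11 + h2R ^ 2 * P21 + 1) * σQ2
    rw [Matrix.det_fin_two_of]
    ring
  rw [d1, d2, d3]
  have e1 : P11 * P21 * (1 + σQ2) * vY11 / (P11 * P21 * (1 + σQ2)) = vY11 := by
    field_simp
  have e2 : P11 * P21 * vYh / (P11 * P21 * (1 + σQ2)) = vYh / (1 + σQ2) := by
    rw [div_eq_div_iff (by positivity) (by positivity)]; ring
  have e3 : vYR * vYh / (vYR * σQ2) = vYh / σQ2 := by
    rw [div_eq_div_iff (by positivity) (by positivity)]; ring
  rw [e1, e2, e3]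
  have rhs : (1 + h11 ^ 2 * P11 + h21 ^ 2 * P21) * σQ2 / (1 + σQ2)
      = vY11 * σQ2 / (1 + σQ2) := by
    show _ = (h11 ^ 2 * P11 + h21 ^ 2 * P21 + 1) * σQ2 / (1 + σQ2)
    ring
  rw [rhs, Real.log_div (by positivity) (by positivity),
    Real.log_div (by positivity) (by positivity),
    Real.log_div (by positivity) (by positivity),
    Real.log_mul (by positivity) (by positivity)]
  ring
end
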